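/- Let φ₀ be a real-valued harmonic function on an open set Ω ⊆ ℂ with a non-degenerate critical point at p, and suppose Ω is a sufficiently small disk around p so that |∂_z² φ₀| ≥ c₀ > 0 and the first-order Taylor remainder of ∂_z φ₀ is dominated by the leading term. Then there is a constant C' > 0 such that for all real-valued u ∈ C_c^∞(Ω) and all h > 0: ‖∂̄u‖²_{L²} + (1/h²)‖u·|∂φ₀|‖²_{L²} ≥ (C'/h)‖u‖²_{L²}. -/

import Mathlib

/-- `u : ℂ → ℝ` is harmonic on `s`: `∂²u/∂x² + ∂²u/∂y² = 0` on `s`. -/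
def HarmonicOnSet (u : ℂ → ℝ) (s : Set ℂ) : Prop :=
  ∀ z ∈ s,
    fderiv ℝ (fun w => fderiv ℝ u w 1) z 1
      + fderiv ℝ (fun w => fderiv ℝ u w Complex.I) z Complex.I = 0

/-- `∂_z u = (∂_x u - i ∂_y u)/2` for a real-valued function `u`. -/
noncomputable def dzReal (u : ℂ → ℝ) : ℂ → ℂ :=
  fun z => ((fderiv ℝ u z 1 : ℂ) - Complex.I * (fderiv ℝ u z Complex.I : ℂ)) / 2

/-- `∂̄u = (∂_x u + i ∂_y u)/2` for a real-valued function `u`. -/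
noncomputable def dbarReal (u : ℂ → ℝ) : ℂ → ℂ :=
  fun z => ((fderiv ℝ u z 1 : ℂ) + Complex.I * (fderiv ℝ u z Complex.I : ℂ)) / 2

open MeasureTheory Complex Topology

namespace CarlemanAux

lemma isClosedEmbedding_lineH (y : ℝ) :
    IsClosedEmbedding (fun t : ℝ => (t : ℂ) + y * Complex.I) := by
  apply Isometry.isClosedEmbedding
  apply Isometry.of_dist_eq
  intro a b
  have : ((a : ℂ) + y * Complex.I) - ((b : ℂ) + y * Complex.I) = ((a - b : ℝ) : ℂ) := by
    push_cast; ring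
  rw [Complex.dist_eq, this, Complex.norm_real, Real.norm_eq_abs, Real.dist_eq]

lemma isClosedEmbedding_lineV (x : ℝ) :
    IsClosedEmbedding (fun t : ℝ => (x : ℂ) + t * Complex.I) := by
  apply Isometry.isClosedEmbedding
  apply Isometry.of_dist_eq
  intro a b
  have : ((x : ℂ) + a * Complex.I) - ((x : ℂ) + b * Complex.I) = ((a - b : ℝ) : ℂ) * Complex.I := by
    push_cast; ring
  rw [Complex.dist_eq, this, norm_mul, Complex.norm_real, Real.norm_eq_abs, Complex.norm_I, mul_one, Real.dist_eq]

lemma hasDerivAt_lineH (y : ℝ) (x : ℝ) :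
    HasDerivAt (fun t : ℝ => (t : ℂ) + y * Complex.I) 1 x := by
  simpa using (Complex.ofRealCLM.hasDerivAt (x := x)).add_const (y * Complex.I)

lemma hasDerivAt_lineV (x : ℝ) (y : ℝ) :
    HasDerivAt (fun t : ℝ => (x : ℂ) + t * Complex.I) Complex.I y := by
  simpa using ((Complex.ofRealCLM.hasDerivAt (x := y)).mul_const Complex.I).const_add (x : ℂ)

/-- Integration by parts with no boundary term: the integral over `ℂ` of a directional
derivative (in direction `1` or `I`) of a compactly supported `C¹` function vanishes. -/
lemma integral_fderiv_eq_zero (F : ℂ → ℂ) (hF : ContDiff ℝ 1 F)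
    (hs : HasCompactSupport F) (v : ℂ) (hv : v = 1 ∨ v = Complex.I) :
    ∫ z : ℂ, fderiv ℝ F z v = 0 := by
  have hFd : Continuous fun z => fderiv ℝ F z v :=
    (hF.continuous_fderiv one_ne_zero).clm_apply continuous_const
  have hFcs : HasCompactSupport fun z => fderiv ℝ F z v :=
    (hs.fderiv ℝ).comp_left (g := fun L : ℂ →L[ℝ] ℂ => L v) rfl
  -- pass to ℝ × ℝ
  have hpt : ∀ q : ℝ × ℝ, Complex.measurableEquivRealProd.symm q = (q.1 : ℂ) + q.2 * Complex.I := by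
    intro q
    rw [Complex.measurableEquivRealProd_symm_apply]
    exact Complex.mk_eq_add_mul_I _ _
  have hchg : (∫ z : ℂ, fderiv ℝ F z v)
      = ∫ q : ℝ × ℝ, fderiv ℝ F ((q.1 : ℂ) + q.2 * Complex.I) v := by
    rw [← (Complex.volume_preserving_equiv_real_prod.symm).integral_comp
      Complex.measurableEquivRealProd.symm.measurableEmbedding
      (fun z => fderiv ℝ F z v)]
    congr 1
    funext q
    rw [hpt q]
  have hecont : Continuous fun q : ℝ × ℝ => (q.1 : ℂ) + q.2 * Complex.I := by
    fun_prop
  have heemb : IsClosedEmbedding fun q : ℝ × ℝ => (q.1 : ℂ) + q.2 * Complex.I := by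
    have h1 : (fun q : ℝ × ℝ => (q.1 : ℂ) + q.2 * Complex.I)
        = ⇑(Complex.equivRealProdCLM.symm.toHomeomorph) := by
      funext q
      simp [Complex.equivRealProdCLM_symm_apply]
    rw [h1]
    exact (Complex.equivRealProdCLM.symm.toHomeomorph).isClosedEmbedding
  have hGcs : HasCompactSupport fun q : ℝ × ℝ => fderiv ℝ F ((q.1 : ℂ) + q.2 * Complex.I) v :=
    hFcs.comp_isClosedEmbedding heemb
  have hGcont : Continuous fun q : ℝ × ℝ => fderiv ℝ F ((q.1 : ℂ) + q.2 * Complex.I) v :=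
    hFd.comp hecont
  have hGint : Integrable (fun q : ℝ × ℝ => fderiv ℝ F ((q.1 : ℂ) + q.2 * Complex.I) v)
      (volume.prod volume) := by
    rw [← Measure.volume_eq_prod]
    exact hGcont.integrable_of_hasCompactSupport hGcs
  rw [hchg, Measure.volume_eq_prod, MeasureTheory.integral_prod _ hGint]
  rcases hv with rfl | rfl
  · -- horizontal direction: integrate in x first
    have hGint' : Integrable (Function.uncurry fun x y : ℝ =>
        fderiv ℝ F ((x : ℂ) + y * Complex.I) 1) (volume.prod volume) := hGint
    rw [show (∫ x : ℝ, ∫ y : ℝ, fderiv ℝ F (((x, y).1 : ℂ) + (x, y).2 * Complex.I) 1)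
        = ∫ x : ℝ, ∫ y : ℝ, fderiv ℝ F ((x : ℂ) + y * Complex.I) 1 from rfl,
      MeasureTheory.integral_integral_swap hGint']
    have inner0 : ∀ y : ℝ, (∫ x : ℝ, fderiv ℝ F ((x : ℂ) + y * Complex.I) 1) = 0 := by
      intro y
      have hiso := isClosedEmbedding_lineH y
      have hd : ∀ x : ℝ, HasDerivAt (fun t : ℝ => F ((t : ℂ) + y * Complex.I))
          (fderiv ℝ F ((x : ℂ) + y * Complex.I) 1) x := fun x =>
        ((hF.differentiable one_ne_zero) _).hasFDerivAt.comp_hasDerivAt x (hasDerivAt_lineH y x)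
      have hfint : Integrable (fun t : ℝ => F ((t : ℂ) + y * Complex.I)) :=
        (hF.continuous.comp (by fun_prop)).integrable_of_hasCompactSupport
          (hs.comp_isClosedEmbedding hiso)
      have hf'int : Integrable (fun t : ℝ => fderiv ℝ F ((t : ℂ) + y * Complex.I) 1) :=
        (hFd.comp (by fun_prop)).integrable_of_hasCompactSupport
          (hFcs.comp_isClosedEmbedding hiso)
      exact MeasureTheory.integral_eq_zero_of_hasDerivAt_of_integrable hd hf'int hfint
    simp [inner0]
  · -- vertical direction: integrate in y first
    have inner0 : ∀ x : ℝ, (∫ y : ℝ, fderiv ℝ F ((x : ℂ) + y * Complex.I) Complex.I) = 0 := by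
      intro x
      have hiso := isClosedEmbedding_lineV x
      have hd : ∀ y : ℝ, HasDerivAt (fun t : ℝ => F ((x : ℂ) + t * Complex.I))
          (fderiv ℝ F ((x : ℂ) + y * Complex.I) Complex.I) y := fun y =>
        ((hF.differentiable one_ne_zero) _).hasFDerivAt.comp_hasDerivAt y (hasDerivAt_lineV x y)
      have hfint : Integrable (fun t : ℝ => F ((x : ℂ) + t * Complex.I)) :=
        (hF.continuous.comp (by fun_prop)).integrable_of_hasCompactSupport
          (hs.comp_isClosedEmbedding hiso)
      have hf'int : Integrable (fun t : ℝ => fderiv ℝ F ((x : ℂ) + t * Complex.I) Complex.I) :=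
        (hFd.comp (by fun_prop)).integrable_of_hasCompactSupport
          (hFcs.comp_isClosedEmbedding hiso)
      exact MeasureTheory.integral_eq_zero_of_hasDerivAt_of_integrable hd hf'int hfint
    simp [inner0]

end CarlemanAux

set_option maxHeartbeats 1000000 in
/-- Quantitative lower bound near a non-degenerate critical point of a harmonic
weight `φ₀` on a small disk `Ω = D(p,r)`: if `|∂_z²φ₀| ≥ c₀ > 0` on `Ω` and the
first-order Taylor remainder of `∂_zφ₀` at `p` is dominated by the leading term,
then there is `C' > 0` such that for all real-valued `u ∈ C_c^∞(Ω)` and `h > 0`: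
`‖∂̄u‖² + (1/h²)‖u·|∂φ₀|‖² ≥ (C'/h)‖u‖²` in `L²`. -/
theorem degenerate_weight_carleman_lower_bound
    (p : ℂ) (r : ℝ) (hr : 0 < r)
    (φ₀ : ℂ → ℝ) (hφ : ContDiffOn ℝ (⊤ : ℕ∞) φ₀ (Metric.ball p r))
    (hharm : HarmonicOnSet φ₀ (Metric.ball p r))
    (hcrit : fderiv ℝ φ₀ p = 0)
    (c₀ : ℝ) (hc₀ : 0 < c₀)
    (hlow : ∀ z ∈ Metric.ball p r, c₀ ≤ ‖deriv (dzReal φ₀) z‖)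
    (hrem : ∀ z ∈ Metric.ball p r,
      ‖dzReal φ₀ z - deriv (dzReal φ₀) p * (z - p)‖ ≤ (c₀/2) * ‖z - p‖) :
    ∃ C' > (0:ℝ), ∀ u : ℂ → ℝ, ContDiff ℝ (⊤ : ℕ∞) u → HasCompactSupport u →
      tsupport u ⊆ Metric.ball p r → ∀ h : ℝ, 0 < h →
      (C'/h) * ∫ z : ℂ, (u z) ^ 2 ≤
        (∫ z : ℂ, ‖dbarReal u z‖ ^ 2)
          + (1/h^2) * ∫ z : ℂ, (u z * ‖dzReal φ₀ z‖) ^ 2 := by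
  refine ⟨c₀ / 2, by positivity, ?_⟩
  intro u hu hcs hsupp h hh
  set a : ℂ := deriv (dzReal φ₀) p with ha
  have hca : c₀ ≤ ‖a‖ := hlow p (Metric.mem_ball_self hr)
  -- the anti-holomorphic comparison weight
  set g : ℂ → ℂ := fun z => (starRingEnd ℂ) (a * (z - p)) with hgdef
  have hgnorm : ∀ z, ‖g z‖ = ‖a‖ * ‖z - p‖ := by
    intro z
    simp only [hgdef]
    rw [RCLike.norm_conj, norm_mul]
  have hgbound : ∀ z ∈ tsupport u, ‖g z‖ ≤ 2 * ‖dzReal φ₀ z‖ := by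
    intro z hz
    have hzball := hsupp hz
    have h1 := hrem z hzball
    have h4 : ‖a * (z - p)‖ ≤ ‖dzReal φ₀ z‖ + ‖dzReal φ₀ z - a * (z - p)‖ := by
      have h5 := norm_sub_le (dzReal φ₀ z) (dzReal φ₀ z - a * (z - p))
      have h6 : dzReal φ₀ z - (dzReal φ₀ z - a * (z - p)) = a * (z - p) := by ring
      rw [h6] at h5
      exact h5
    rw [norm_mul] at h4
    rw [hgnorm]
    nlinarith [norm_nonneg (z - p), norm_nonneg (dzReal φ₀ z),
      mul_nonneg (sub_nonneg.2 hca) (norm_nonneg (z - p))]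
  -- a helper to produce compact supports
  have hmono' : ∀ f : ℂ → ℝ, (∀ z ∉ tsupport u, f z = 0) → HasCompactSupport f := by
    intro f hf
    have hsub : tsupport f ⊆ tsupport u := by
      apply closure_minimal ?_ (isClosed_tsupport u)
      intro z hz
      by_contra hzz
      exact hz (hf z hzz)
    exact IsCompact.of_isClosed_subset hcs (isClosed_tsupport f) hsub
  -- the test function for integration by parts
  set U : ℂ → ℂ := fun z => ((u z : ℝ) : ℂ) with hUdef
  set F : ℂ → ℂ := fun z => U z * U z * g z with hFdef
  have hUc : ContDiff ℝ (⊤ : ℕ∞) U := Complex.ofRealCLM.contDiff.comp hu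
  have hgc : ContDiff ℝ (⊤ : ℕ∞) g := by
    have hm : ContDiff ℝ (⊤ : ℕ∞) fun z : ℂ => a * (z - p) :=
      contDiff_const.mul (contDiff_id.sub contDiff_const)
    have h3 : g = fun z : ℂ => Complex.conjCLE (a * (z - p)) := by
      funext z
      simp only [hgdef, Complex.conjCLE_apply]
    rw [h3]
    exact Complex.conjCLE.contDiff.comp hm
  have hFc : ContDiff ℝ (⊤ : ℕ∞) F := (hUc.mul hUc).mul hgc
  have hUcs : HasCompactSupport U := hcs.comp_left (g := fun t : ℝ => (t : ℂ)) (by simp)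
  have hFcs : HasCompactSupport F := by
    apply hUcs.mono
    intro z hz
    simp only [Function.mem_support, hFdef] at hz ⊢
    intro h0
    apply hz
    rw [h0]; ring
  -- derivative of F
  have hud : ∀ z, HasFDerivAt U (Complex.ofRealCLM.comp (fderiv ℝ u z)) z := fun z =>
    Complex.ofRealCLM.hasFDerivAt.comp z (hu.differentiable (by simp) z).hasFDerivAt
  have hgd : ∀ z, HasFDerivAt g
      ((Complex.conjCLE : ℂ →L[ℝ] ℂ).comp (a • ContinuousLinearMap.id ℝ ℂ)) z := by
    intro z
    have hm : HasFDerivAt (fun w : ℂ => a * (w - p)) (a • ContinuousLinearMap.id ℝ ℂ) z :=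
      ((hasFDerivAt_id z).sub_const p).const_mul a
    have h3 := Complex.conjCLE.hasFDerivAt.comp z hm
    have h4 : g = ⇑Complex.conjCLE ∘ (fun w : ℂ => a * (w - p)) := by
      funext w
      simp only [hgdef, Function.comp_apply, Complex.conjCLE_apply]
    rw [h4]
    exact h3
  have hFd : ∀ z, HasFDerivAt F
      ((U z * U z) • ((Complex.conjCLE : ℂ →L[ℝ] ℂ).comp (a • ContinuousLinearMap.id ℝ ℂ))
        + g z • (U z • (Complex.ofRealCLM.comp (fderiv ℝ u z))
            + U z • (Complex.ofRealCLM.comp (fderiv ℝ u z)))) z := fun z =>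
    ((hud z).mul (hud z)).mul (hgd z)
  -- the key pointwise identity for the directional derivatives
  have hsum : ∀ z, fderiv ℝ F z 1 + Complex.I * fderiv ℝ F z Complex.I
      = 4 * U z * dbarReal u z * g z + 2 * (U z * U z) * (starRingEnd ℂ) a := by
    intro z
    rw [(hFd z).fderiv]
    simp only [ContinuousLinearMap.add_apply, ContinuousLinearMap.coe_smul',
      Pi.smul_apply, ContinuousLinearMap.coe_comp', Function.comp_apply,
      ContinuousLinearMap.smul_apply, ContinuousLinearMap.coe_id', id_eq,
      Complex.ofRealCLM_apply, ContinuousLinearEquiv.coe_coe, Complex.conjCLE_apply,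
      smul_eq_mul, map_mul, map_one, Complex.conj_I, dbarReal]
    ring_nf
    simp only [Complex.I_sq]
    ring
  -- integration by parts
  have hF1 : ∫ z : ℂ, fderiv ℝ F z 1 = 0 :=
    CarlemanAux.integral_fderiv_eq_zero F (hFc.of_le (by simp)) hFcs 1 (Or.inl rfl)
  have hFI : ∫ z : ℂ, fderiv ℝ F z Complex.I = 0 :=
    CarlemanAux.integral_fderiv_eq_zero F (hFc.of_le (by simp)) hFcs Complex.I (Or.inr rfl)
  -- continuity facts
  have hfderivu : Continuous fun z => fderiv ℝ u z := hu.continuous_fderiv (by simp)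
  have hdbarc : Continuous (dbarReal u) := by
    unfold dbarReal
    exact (((Complex.continuous_ofReal.comp (hfderivu.clm_apply continuous_const)).add
      (continuous_const.mul (Complex.continuous_ofReal.comp
        (hfderivu.clm_apply continuous_const))))).div_const 2
  have hdbar0 : ∀ z ∉ tsupport u, dbarReal u z = 0 := by
    intro z hz
    have h0 : fderiv ℝ u z = 0 := by
      have he : u =ᶠ[nhds z] 0 := notMem_tsupport_iff_eventuallyEq.mp hz
      rw [he.fderiv_eq]
      exact fderiv_const_apply 0
    simp [dbarReal, h0]
  -- integrabilities
  have hintd1 : Integrable (fun z : ℂ => fderiv ℝ F z 1) :=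
    ((hFc.continuous_fderiv (by simp)).clm_apply
      continuous_const).integrable_of_hasCompactSupport
      ((hFcs.fderiv ℝ).comp_left (g := fun L : ℂ →L[ℝ] ℂ => L 1) rfl)
  have hintdI : Integrable (fun z : ℂ => fderiv ℝ F z Complex.I) :=
    ((hFc.continuous_fderiv (by simp)).clm_apply
      continuous_const).integrable_of_hasCompactSupport
      ((hFcs.fderiv ℝ).comp_left (g := fun L : ℂ →L[ℝ] ℂ => L Complex.I) rfl)
  have hintf1 : Integrable (fun z : ℂ => 4 * U z * dbarReal u z * g z) := by
    apply Continuous.integrable_of_hasCompactSupport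
    · exact ((continuous_const.mul (Complex.continuous_ofReal.comp
        hu.continuous)).mul hdbarc).mul hgc.continuous
    · apply hUcs.mono
      intro z hz
      simp only [Function.mem_support, hUdef] at hz ⊢
      intro h0
      apply hz
      rw [h0]
      ring
  have hintf2 : Integrable (fun z : ℂ => 2 * (U z * U z) * (starRingEnd ℂ) a) := by
    apply Continuous.integrable_of_hasCompactSupport
    · exact (continuous_const.mul ((Complex.continuous_ofReal.comp hu.continuous).mul
        (Complex.continuous_ofReal.comp hu.continuous))).mul continuous_const
    · apply hUcs.mono
      intro z hz
      simp only [Function.mem_support, hUdef] at hz ⊢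
      intro h0
      apply hz
      rw [h0]
      ring
  -- the integral identity
  set S : ℝ := ∫ z : ℂ, (u z) ^ 2 with hSdef
  have hS0 : 0 ≤ S := integral_nonneg fun z => sq_nonneg _
  have hintsum : (∫ z : ℂ, (4 * U z * dbarReal u z * g z + 2 * (U z * U z) * (starRingEnd ℂ) a))
      = 0 := by
    have heq : (fun z : ℂ => 4 * U z * dbarReal u z * g z + 2 * (U z * U z) * (starRingEnd ℂ) a)
        = fun z : ℂ => fderiv ℝ F z 1 + Complex.I * fderiv ℝ F z Complex.I := by
      funext z
      rw [hsum z]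
    rw [heq, integral_add hintd1 (hintdI.const_mul Complex.I),
      MeasureTheory.integral_const_mul, hF1, hFI]
    simp
  have hint2val : (∫ z : ℂ, 2 * (U z * U z) * (starRingEnd ℂ) a)
      = 2 * (starRingEnd ℂ) a * (S : ℂ) := by
    have heq : (fun z : ℂ => 2 * (U z * U z) * (starRingEnd ℂ) a)
        = fun z : ℂ => (2 * (starRingEnd ℂ) a) * (((u z ^ 2 : ℝ) : ℂ)) := by
      funext z
      simp only [hUdef]
      push_cast
      ring
    rw [heq, MeasureTheory.integral_const_mul]
    congr 1
    exact integral_ofReal (𝕜 := ℂ) (f := fun z : ℂ => u z ^ 2)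
  have hkey : ‖∫ z : ℂ, 4 * U z * dbarReal u z * g z‖ = 2 * ‖a‖ * S := by
    have hneg : (∫ z : ℂ, 4 * U z * dbarReal u z * g z)
        = -(2 * (starRingEnd ℂ) a * (S : ℂ)) := by
      have h5 := hintsum
      rw [integral_add hintf1 hintf2, hint2val] at h5
      exact eq_neg_of_add_eq_zero_left h5
    rw [hneg, norm_neg]
    rw [show (2 : ℂ) * (starRingEnd ℂ) a * (S : ℂ)
      = ((2 : ℝ) : ℂ) * ((starRingEnd ℂ) a * (S : ℂ)) by push_cast; ring]
    rw [norm_mul, norm_mul, Complex.norm_real, Complex.norm_real, RCLike.norm_conj,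
      Real.norm_ofNat, Real.norm_eq_abs, _root_.abs_of_nonneg hS0]
    ring
  -- pointwise domination
  have hpt : ∀ z : ℂ, ‖4 * U z * dbarReal u z * g z‖
      ≤ 4 * h * ‖dbarReal u z‖ ^ 2 + (4 / h) * (u z * ‖dzReal φ₀ z‖) ^ 2 := by
    intro z
    by_cases hz : z ∈ tsupport u
    · have hb := hgbound z hz
      have h1 : ‖4 * U z * dbarReal u z * g z‖ = 4 * |u z| * ‖dbarReal u z‖ * ‖g z‖ := by
        rw [show (4 : ℂ) * U z * dbarReal u z * g z
          = ((4 : ℝ) : ℂ) * U z * dbarReal u z * g z by push_cast; ring]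
        simp only [norm_mul, hUdef, Complex.norm_real, Real.norm_ofNat, Real.norm_eq_abs]
      rw [h1, ← mul_le_mul_iff_of_pos_right hh]
      have hexp : (4 * h * ‖dbarReal u z‖ ^ 2 + (4 / h) * (u z * ‖dzReal φ₀ z‖) ^ 2) * h
          = 4 * h * ‖dbarReal u z‖ ^ 2 * h + 4 * (u z * ‖dzReal φ₀ z‖) ^ 2 := by
        field_simp
      rw [hexp]
      have habs : |u z| ^ 2 = (u z) ^ 2 := sq_abs _
      have e1 : 4 * |u z| * ‖dbarReal u z‖ * h * ‖g z‖
          ≤ 4 * |u z| * ‖dbarReal u z‖ * h * (2 * ‖dzReal φ₀ z‖) :=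
        mul_le_mul_of_nonneg_left hb (by positivity)
      have habs2 : (|u z| * ‖dzReal φ₀ z‖) ^ 2 = (u z * ‖dzReal φ₀ z‖) ^ 2 := by
        rw [mul_pow, mul_pow, _root_.sq_abs]
      nlinarith [e1, sq_nonneg (2 * h * ‖dbarReal u z‖ - 2 * (|u z| * ‖dzReal φ₀ z‖)),
        habs, habs2, abs_nonneg (u z), norm_nonneg (dbarReal u z), norm_nonneg (dzReal φ₀ z)]
    · have hu0 : u z = 0 := image_eq_zero_of_notMem_tsupport hz
      have hU0 : U z = 0 := by simp [hUdef, hu0]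
      rw [hU0]
      simp only [mul_zero, zero_mul, norm_zero, hu0]
      positivity
  -- integrability of the dominating function
  have hE1 : Integrable (fun z : ℂ => ‖dbarReal u z‖ ^ 2) := by
    apply Continuous.integrable_of_hasCompactSupport (hdbarc.norm.pow 2)
    apply hmono'
    intro z hz
    simp [hdbar0 z hz]
  have hwcont : Continuous fun z : ℂ => u z * ‖dzReal φ₀ z‖ := by
    rw [continuous_iff_continuousAt]
    intro z
    by_cases hz : z ∈ Metric.ball p r
    · have hφd : ContinuousAt (fun w => fderiv ℝ φ₀ w) z :=
        (hφ.continuousOn_fderiv_of_isOpen Metric.isOpen_ball (by simp)).continuousAt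
          (Metric.isOpen_ball.mem_nhds hz)
      have h1a : ContinuousAt (fun w => fderiv ℝ φ₀ w (1 : ℂ)) z :=
        ((ContinuousLinearMap.apply ℝ ℝ ((1 : ℂ))).continuous.continuousAt).comp hφd
      have hIa : ContinuousAt (fun w => fderiv ℝ φ₀ w Complex.I) z :=
        ((ContinuousLinearMap.apply ℝ ℝ Complex.I).continuous.continuousAt).comp hφd
      have hdz : ContinuousAt (dzReal φ₀) z := by
        unfold dzReal
        exact ((Complex.continuous_ofReal.continuousAt.comp h1a).sub
          (continuousAt_const.mul (Complex.continuous_ofReal.continuousAt.comp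
            hIa))).div_const 2
      exact hu.continuous.continuousAt.mul hdz.norm
    · have hz' : z ∉ tsupport u := fun hmem => hz (hsupp hmem)
      have he : u =ᶠ[nhds z] 0 := notMem_tsupport_iff_eventuallyEq.mp hz'
      have he2 : (fun w => u w * ‖dzReal φ₀ w‖) =ᶠ[nhds z] fun _ => (0 : ℝ) := by
        filter_upwards [he] with w hw
        simp [hw]
      exact ContinuousAt.congr continuousAt_const he2.symm
  have hE2 : Integrable (fun z : ℂ => (u z * ‖dzReal φ₀ z‖) ^ 2) := by
    apply Continuous.integrable_of_hasCompactSupport (hwcont.pow 2)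
    apply hmono'
    intro z hz
    simp [image_eq_zero_of_notMem_tsupport hz]
  -- put everything together
  have hnormint : ‖∫ z : ℂ, 4 * U z * dbarReal u z * g z‖
      ≤ ∫ z : ℂ, ‖4 * U z * dbarReal u z * g z‖ := norm_integral_le_integral_norm _
  have hcomp : (∫ z : ℂ, ‖4 * U z * dbarReal u z * g z‖)
      ≤ ∫ z : ℂ, (4 * h * ‖dbarReal u z‖ ^ 2 + (4 / h) * (u z * ‖dzReal φ₀ z‖) ^ 2) :=
    integral_mono_of_nonneg (Filter.Eventually.of_forall fun z => norm_nonneg _)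
      ((hE1.const_mul (4 * h)).add (hE2.const_mul (4 / h)))
      (Filter.Eventually.of_forall hpt)
  have hsplit : (∫ z : ℂ, (4 * h * ‖dbarReal u z‖ ^ 2 + (4 / h) * (u z * ‖dzReal φ₀ z‖) ^ 2))
      = 4 * h * (∫ z : ℂ, ‖dbarReal u z‖ ^ 2)
        + (4 / h) * ∫ z : ℂ, (u z * ‖dzReal φ₀ z‖) ^ 2 := by
    rw [integral_add (hE1.const_mul (4 * h)) (hE2.const_mul (4 / h)),
      MeasureTheory.integral_const_mul, MeasureTheory.integral_const_mul]
  set I₁ : ℝ := ∫ z : ℂ, ‖dbarReal u z‖ ^ 2 with hI1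
  set I₂ : ℝ := ∫ z : ℂ, (u z * ‖dzReal φ₀ z‖) ^ 2 with hI2
  have hmain : 2 * ‖a‖ * S ≤ 4 * h * I₁ + (4 / h) * I₂ := by
    rw [← hkey]
    calc ‖∫ z : ℂ, 4 * U z * dbarReal u z * g z‖
        ≤ ∫ z : ℂ, ‖4 * U z * dbarReal u z * g z‖ := hnormint
      _ ≤ _ := by rw [← hsplit] at *; exact hcomp
  rw [div_div, div_mul_eq_mul_div, div_le_iff₀ (by positivity : (0:ℝ) < 2 * h)]
  have hexp2 : (I₁ + 1 / h ^ 2 * I₂) * (2 * h) = 2 * h * I₁ + (2 / h) * I₂ := by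
    field_simp
  rw [hexp2]
  have h44 : (4 / h) * I₂ = 2 * ((2 / h) * I₂) := by ring
  nlinarith [hmain, mul_nonneg (sub_nonneg.2 hca) hS0]
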